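/- Every general bipyramidal cone of dimension n ≥ 2 has exactly 2n − 2 extreme rays. -/

import Mathlib

open scoped BigOperators

/-- The cone of nonnegative rational combinations of elements of `S`. -/
def posSpan {n : ℕ} (S : Set (Fin n → ℚ)) : Set (Fin n → ℚ) :=
  {x | ∃ (k : ℕ) (c : Fin k → ℚ) (b : Fin k → (Fin n → ℚ)),
    (∀ i, 0 ≤ c i) ∧ (∀ i, b i ∈ S) ∧ x = ∑ i, c i • b i}

/-- A rational polyhedral cone: `posSpan` of a finite set. -/
def IsPolyCone {n : ℕ} (σ : Set (Fin n → ℚ)) : Prop :=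
  ∃ B : Finset (Fin n → ℚ), σ = posSpan (B : Set (Fin n → ℚ))

/-- A cone is strongly convex if `σ ∩ (-σ) = {0}`. -/
def StronglyConvex {n : ℕ} (σ : Set (Fin n → ℚ)) : Prop :=
  ∀ x, x ∈ σ → -x ∈ σ → x = 0

/-- dot product in `ℚ^n`. -/
def dotQ {n : ℕ} (c x : Fin n → ℚ) : ℚ := ∑ i, c i * x i

/-- `R` is an extreme ray of `σ`: a one-dimensional face cut out by a
supporting vector `c`. -/
def IsExtremeRay {n : ℕ} (σ R : Set (Fin n → ℚ)) : Prop :=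
  ∃ c : Fin n → ℚ, (∀ x ∈ σ, 0 ≤ dotQ c x) ∧
    R = {x ∈ σ | dotQ c x = 0} ∧
    Module.finrank ℚ (Submodule.span ℚ R) = 1

/-- The dimension of a cone: dimension of its rational linear span. -/
noncomputable def coneDim {n : ℕ} (σ : Set (Fin n → ℚ)) : ℕ :=
  Module.finrank ℚ (Submodule.span ℚ σ)

/-- `σ` is the direct sum of `σ₁` and `σ₂` along `a`. -/
def IsDirectSumAlong {n : ℕ} (σ₁ σ₂ σ : Set (Fin n → ℚ)) (a : Fin n → ℚ) : Prop :=
  a ∈ σ₁ ∩ σ₂ ∧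
  Submodule.span ℚ σ₁ ⊓ Submodule.span ℚ σ₂ = Submodule.span ℚ {a} ∧
  σ = posSpan (σ₁ ∪ σ₂)

/-- `σ` is a direct sum of `σ₁` and `σ₂`. -/
def IsDirectSum {n : ℕ} (σ₁ σ₂ σ : Set (Fin n → ℚ)) : Prop :=
  ∃ a, IsDirectSumAlong σ₁ σ₂ σ a

/-- `a` lies on an extreme ray of `σ`. -/
def OnExtremeRay {n : ℕ} (σ : Set (Fin n → ℚ)) (a : Fin n → ℚ) : Prop :=
  ∃ R, IsExtremeRay σ R ∧ a ∈ R

/-- The ray `ℚ⁺ r`. -/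
def rayOf {n : ℕ} (r : Fin n → ℚ) : Set (Fin n → ℚ) :=
  {x | ∃ q : ℚ, 0 ≤ q ∧ x = q • r}

/-- General bipyramidal cones: the smallest class of cones containing all
2-simplex cones and closed under direct sum of internal type. -/
inductive GenBipyramidal {n : ℕ} : Set (Fin n → ℚ) → Prop
  | simplex2 (r₁ r₂ : Fin n → ℚ) (h : LinearIndependent ℚ ![r₁, r₂]) :
      GenBipyramidal (posSpan {r₁, r₂})
  | internal (σ₁ σ₂ : Set (Fin n → ℚ)) (a : Fin n → ℚ)
      (h₁ : GenBipyramidal σ₁) (h₂ : GenBipyramidal σ₂)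
      (hds : IsDirectSumAlong σ₁ σ₂ (posSpan (σ₁ ∪ σ₂)) a)
      (hint₁ : ¬ OnExtremeRay σ₁ a) (hint₂ : ¬ OnExtremeRay σ₂ a) :
      GenBipyramidal (posSpan (σ₁ ∪ σ₂))

/-- The smallest class of cones containing all rational simplex cones and
closed under direct sum (the class of complete intersection cones). -/
inductive CICone {n : ℕ} : Set (Fin n → ℚ) → Prop
  | simplex (s : ℕ) (r : Fin s → (Fin n → ℚ)) (h : LinearIndependent ℚ r) :
      CICone (posSpan (Set.range r))
  | dsum (σ₁ σ₂ : Set (Fin n → ℚ)) (h₁ : CICone σ₁) (h₂ : CICone σ₂)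
      (hds : IsDirectSum σ₁ σ₂ (posSpan (σ₁ ∪ σ₂))) :
      CICone (posSpan (σ₁ ∪ σ₂))


/-!
Every general bipyramidal cone `σ` carries a linear functional that is positive on `σ \ {0}`;
for an internal sum `σ₁ ⊕_a σ₂` it is obtained by gluing those of `σ₁` and `σ₂`, rescaled to agree
on the common line `ℚ a = span σ₁ ⊓ span σ₂`. The same gluing, applied to a supporting functional
of an extreme ray of `σ₁`, shows that this ray stays extreme in the sum. Conversely, an extreme ray
of the sum contained in neither summand has nonzero pieces in both, so it spans `ℚ a`, and then `a`
lies on an extreme ray of `σ₁`; the same happens for a ray extreme in both summands. Hence the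
extreme rays of `σ₁ ⊕_a σ₂` are the disjoint union of those of `σ₁` and `σ₂`, while its dimension
is `dim σ₁ + dim σ₂ - 1`, and the count `2m - 2` follows by induction from the two rays of a
2-simplex cone.
-/

open Module Submodule

section LinearAlgebra

theorem LinearMap.exists_eqOn_sup {K V M : Type*} [DivisionRing K] [AddCommGroup V]
    [Module K V] [AddCommGroup M] [Module K M] {U W : Submodule K V} (f g : V →ₗ[K] M)
    (h : ∀ x ∈ U ⊓ W, f x = g x) :
    ∃ F : V →ₗ[K] M, (∀ x ∈ U, F x = f x) ∧ ∀ x ∈ W, F x = g x := by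
  let p := LinearPMap.sup ⟨U, f.domRestrict U⟩ ⟨W, g.domRestrict W⟩
    fun x y hxy => h x ⟨x.2, hxy ▸ y.2⟩ |>.trans (congrArg g hxy)
  obtain ⟨F, hF⟩ := p.toFun.exists_extend
  refine ⟨F, fun x hx => ?_, fun x hx => ?_⟩
  · exact (LinearMap.congr_fun hF ⟨x, le_sup_left (b := W) hx⟩).trans
      ((LinearPMap.left_le_sup _ _ _).2 (x := ⟨x, hx⟩) rfl).symm
  · exact (LinearMap.congr_fun hF ⟨x, le_sup_right (a := U) hx⟩).trans
      ((LinearPMap.right_le_sup _ _ _).2 (x := ⟨x, hx⟩) rfl).symm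

theorem LinearMap.exists_eqOn_sup_of_inf_eq_span_singleton {K V M : Type*} [DivisionRing K]
    [AddCommGroup V] [Module K V] [AddCommGroup M] [Module K M] {U W : Submodule K V} {a : V}
    (hUW : U ⊓ W = K ∙ a) (f g : V →ₗ[K] M) (ha : f a = g a) :
    ∃ F : V →ₗ[K] M, (∀ x ∈ U, F x = f x) ∧ ∀ x ∈ W, F x = g x :=
  LinearMap.exists_eqOn_sup f g fun x hx => by
    obtain ⟨t, rfl⟩ := mem_span_singleton.1 (hUW ▸ hx)
    simp [ha]

variable {K V : Type*} [Field K] [AddCommGroup V] [Module K V]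

theorem LinearIndependent.exists_dual_apply_eq {ι : Type*} {v : ι → V}
    (hv : LinearIndependent K v) (w : ι → K) : ∃ f : Dual K V, ∀ i, f (v i) = w i := by
  obtain ⟨f, hf⟩ := ((Basis.span hv).constr K w).exists_extend
  refine ⟨f, fun i => ?_⟩
  have := LinearMap.congr_fun hf (Basis.span hv i)
  rwa [LinearMap.comp_apply, Basis.constr_basis, subtype_apply, Basis.span_apply] at this

theorem Submodule.eq_span_singleton_of_finrank_eq_one {S : Submodule K V} {x : V}
    (hS : finrank K S = 1) (hx : x ∈ S) (hx0 : x ≠ 0) : S = K ∙ x :=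
  have := Module.finite_of_finrank_eq_succ hS
  (eq_of_le_of_finrank_eq ((span_singleton_le_iff_mem x S).2 hx)
    (by rw [finrank_span_singleton hx0, hS])).symm

theorem Submodule.eq_span_singleton_of_le {S : Submodule K V} {a : V}
    (hS : finrank K S = 1) (h : S ≤ K ∙ a) : S = K ∙ a :=
  eq_of_le_of_finrank_le h <| hS ▸ (finrank_span_le_card {a}).trans (by simp)

theorem Submodule.exists_mem_ne_zero_of_finrank_span_eq_one {s : Set V}
    (h : finrank K (span K s) = 1) : ∃ x ∈ s, x ≠ 0 := by
  by_contra! hs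
  rw [span_eq_bot.2 hs, finrank_bot] at h
  exact zero_ne_one h

end LinearAlgebra

section Cones

variable {n : ℕ}

theorem posSpan_eq_hull (S : Set (Fin n → ℚ)) : posSpan S = PointedCone.hull ℚ S := by
  ext x
  rw [SetLike.mem_coe, mem_span_set']
  constructor
  · rintro ⟨k, c, b, hc, hb, rfl⟩
    exact ⟨k, fun i => ⟨c i, hc i⟩, fun i => ⟨b i, hb i⟩, rfl⟩
  · rintro ⟨k, c, b, rfl⟩
    exact ⟨k, fun i => c i, fun i => b i, fun i => (c i).2, fun i => (b i).2, rfl⟩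

theorem span_posSpan (S : Set (Fin n → ℚ)) : span ℚ (posSpan S) = span ℚ S := by
  rw [posSpan_eq_hull, span_span_of_tower]

theorem posSpan_union_coe (C₁ C₂ : PointedCone ℚ (Fin n → ℚ)) :
    posSpan (↑C₁ ∪ ↑C₂) = ((C₁ ⊔ C₂ : PointedCone ℚ _) : Set (Fin n → ℚ)) := by
  rw [posSpan_eq_hull, PointedCone.hull, span_union, span_eq, span_eq]

theorem mem_posSpan_pair {r₁ r₂ x : Fin n → ℚ} :
    x ∈ posSpan {r₁, r₂} ↔ ∃ α β : ℚ, 0 ≤ α ∧ 0 ≤ β ∧ x = α • r₁ + β • r₂ := by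
  rw [posSpan_eq_hull, SetLike.mem_coe, mem_span_pair]
  constructor
  · rintro ⟨α, β, rfl⟩
    exact ⟨α, β, α.2, β.2, rfl⟩
  · rintro ⟨α, β, hα, hβ, rfl⟩
    exact ⟨⟨α, hα⟩, ⟨β, hβ⟩, rfl⟩

theorem isExtremeRay_iff {σ R : Set (Fin n → ℚ)} :
    IsExtremeRay σ R ↔ ∃ F : Dual ℚ (Fin n → ℚ), (∀ x ∈ σ, 0 ≤ F x) ∧
      R = {x ∈ σ | F x = 0} ∧ finrank ℚ (span ℚ R) = 1 := by
  constructor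
  · rintro ⟨c, h⟩
    exact ⟨dotProductEquiv ℚ (Fin n) c, h⟩
  · rintro ⟨F, h⟩
    obtain ⟨c, rfl⟩ := (dotProductEquiv ℚ (Fin n)).surjective F
    exact ⟨c, h⟩

namespace IsExtremeRay

variable {σ σ' R : Set (Fin n → ℚ)}

theorem subset (hR : IsExtremeRay σ R) : R ⊆ σ := by
  obtain ⟨F, -, rfl, -⟩ := isExtremeRay_iff.1 hR
  exact fun x hx => hx.1

theorem finrank_span (hR : IsExtremeRay σ R) : finrank ℚ (span ℚ R) = 1 := by
  obtain ⟨-, -, -, hrank⟩ := hR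
  exact hrank

theorem mem_of_mem_span (hR : IsExtremeRay σ R) {a : Fin n → ℚ} (ha : a ∈ σ)
    (haR : a ∈ span ℚ R) : a ∈ R := by
  obtain ⟨F, -, rfl, -⟩ := isExtremeRay_iff.1 hR
  have hker : span ℚ {x ∈ σ | F x = 0} ≤ LinearMap.ker F := span_le.2 fun x hx => hx.2
  exact ⟨ha, hker haR⟩

theorem zero_mem (hR : IsExtremeRay σ R) (h0 : (0 : Fin n → ℚ) ∈ σ) : 0 ∈ R :=
  hR.mem_of_mem_span h0 (span ℚ R).zero_mem

theorem inter_of_span_le (hR : IsExtremeRay σ R) (hσ : σ' ⊆ σ)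
    (hspan : span ℚ R ≤ span ℚ (R ∩ σ')) : IsExtremeRay σ' (R ∩ σ') := by
  obtain ⟨F, hF, hRF, hrank⟩ := isExtremeRay_iff.1 hR
  refine isExtremeRay_iff.2 ⟨F, fun x hx => hF x (hσ hx), ?_, ?_⟩
  · ext x
    rw [hRF]
    exact ⟨fun ⟨⟨_, hFx⟩, hx⟩ => ⟨hx, hFx⟩, fun ⟨hx, hFx⟩ => ⟨⟨hσ hx, hFx⟩, hx⟩⟩
  · rwa [le_antisymm (span_mono Set.inter_subset_left) hspan]

theorem of_subset (hR : IsExtremeRay σ R) (hσ : σ' ⊆ σ) (hRσ' : R ⊆ σ') :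
    IsExtremeRay σ' R := by
  have := hR.inter_of_span_le hσ (by rw [Set.inter_eq_left.2 hRσ'])
  rwa [Set.inter_eq_left.2 hRσ'] at this

end IsExtremeRay

def IsStrictlyPositiveOn (F : Dual ℚ (Fin n → ℚ)) (σ : Set (Fin n → ℚ)) : Prop :=
  ∀ x ∈ σ, x ≠ 0 → 0 < F x

namespace IsStrictlyPositiveOn

variable {F : Dual ℚ (Fin n → ℚ)} {σ : Set (Fin n → ℚ)}

theorem nonneg (hF : IsStrictlyPositiveOn F σ) (x : Fin n → ℚ) (hx : x ∈ σ) : 0 ≤ F x := by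
  obtain rfl | hx0 := eq_or_ne x 0
  · simp
  · exact (hF x hx hx0).le

theorem eq_zero (hF : IsStrictlyPositiveOn F σ) {x : Fin n → ℚ} (hx : x ∈ σ) (hFx : F x = 0) :
    x = 0 :=
  by_contra fun hx0 => (hF x hx hx0).ne' hFx

end IsStrictlyPositiveOn

theorem not_isExtremeRay_and_isExtremeRay {σ₁ σ₂ R : Set (Fin n → ℚ)} {a : Fin n → ℚ}
    (ha₁ : a ∈ σ₁) (hspan : span ℚ σ₁ ⊓ span ℚ σ₂ = ℚ ∙ a) (hint₁ : ¬ OnExtremeRay σ₁ a)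
    (h₁ : IsExtremeRay σ₁ R) (h₂ : IsExtremeRay σ₂ R) : False := by
  have hRa : span ℚ R = ℚ ∙ a := eq_span_singleton_of_le h₁.finrank_span
    (hspan ▸ le_inf (span_mono h₁.subset) (span_mono h₂.subset))
  exact hint₁ ⟨R, h₁, h₁.mem_of_mem_span ha₁ (hRa ▸ mem_span_singleton_self a)⟩

theorem coneDim_posSpan_union_add_one {σ₁ σ₂ : Set (Fin n → ℚ)} {a : Fin n → ℚ} (ha : a ≠ 0)
    (hspan : span ℚ σ₁ ⊓ span ℚ σ₂ = ℚ ∙ a) :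
    coneDim (posSpan (σ₁ ∪ σ₂)) + 1 = coneDim σ₁ + coneDim σ₂ := by
  have := finrank_sup_add_finrank_inf_eq (span ℚ σ₁) (span ℚ σ₂)
  rwa [hspan, finrank_span_singleton ha, ← span_union, ← span_posSpan] at this

section DirectSum

variable {C₁ C₂ : PointedCone ℚ (Fin n → ℚ)} {a : Fin n → ℚ}

theorem exists_extension_to_sup {F₁ F₂ : Dual ℚ (Fin n → ℚ)} (hF₁ : ∀ x ∈ C₁, 0 ≤ F₁ x)
    (hF₂ : IsStrictlyPositiveOn F₂ C₂) (ha₁ : a ∈ C₁) (ha₂ : a ∈ C₂)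
    (hspan : span ℚ (C₁ : Set (Fin n → ℚ)) ⊓ span ℚ C₂ = ℚ ∙ a) (ha : F₁ a = 0 → a = 0) :
    ∃ F : Dual ℚ (Fin n → ℚ), (∀ x ∈ C₁ ⊔ C₂, 0 ≤ F x) ∧
      {x | x ∈ C₁ ⊔ C₂ ∧ F x = 0} = {x | x ∈ C₁ ∧ F₁ x = 0} := by
  obtain ⟨μ, hμ, hμa⟩ : ∃ μ : ℚ, 0 < μ ∧ F₁ a = μ * F₂ a := by
    obtain rfl | h0 := eq_or_ne a 0
    · exact ⟨1, one_pos, by simp⟩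
    · refine ⟨F₁ a / F₂ a, div_pos ((hF₁ a ha₁).lt_of_ne (Ne.symm (mt ha h0))) (hF₂ a ha₂ h0), ?_⟩
      field_simp [(hF₂ a ha₂ h0).ne']
  obtain ⟨F, hFU, hFW⟩ :=
    LinearMap.exists_eqOn_sup_of_inf_eq_span_singleton hspan F₁ (μ • F₂) hμa
  have hF : ∀ x₁ ∈ C₁, ∀ x₂ ∈ C₂, F (x₁ + x₂) = F₁ x₁ + μ * F₂ x₂ := fun x₁ h₁ x₂ h₂ => by
    rw [map_add, hFU x₁ (subset_span h₁), hFW x₂ (subset_span h₂)]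
    rfl
  refine ⟨F, fun x hx => ?_, Set.ext fun x => ⟨fun ⟨hx, hFx⟩ => ?_, fun ⟨hx, hFx⟩ => ?_⟩⟩
  · obtain ⟨x₁, h₁, x₂, h₂, rfl⟩ := mem_sup.1 hx
    rw [hF x₁ h₁ x₂ h₂]
    exact add_nonneg (hF₁ x₁ h₁) (mul_nonneg hμ.le (hF₂.nonneg x₂ h₂))
  · obtain ⟨x₁, h₁, x₂, h₂, rfl⟩ := mem_sup.1 hx
    rw [hF x₁ h₁ x₂ h₂] at hFx
    have := hF₁ x₁ h₁
    have := hF₂.nonneg x₂ h₂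
    obtain rfl : x₂ = 0 := hF₂.eq_zero h₂ (by nlinarith)
    rw [map_zero, mul_zero, add_zero] at hFx
    exact ⟨by simpa using h₁, by simpa using hFx⟩
  · exact ⟨mem_sup_left hx, (hFU x (subset_span hx)).trans hFx⟩

theorem IsStrictlyPositiveOn.exists_sup {F₁ F₂ : Dual ℚ (Fin n → ℚ)}
    (hF₁ : IsStrictlyPositiveOn F₁ C₁) (hF₂ : IsStrictlyPositiveOn F₂ C₂) (ha₁ : a ∈ C₁)
    (ha₂ : a ∈ C₂) (hspan : span ℚ (C₁ : Set (Fin n → ℚ)) ⊓ span ℚ C₂ = ℚ ∙ a) :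
    ∃ F : Dual ℚ (Fin n → ℚ), IsStrictlyPositiveOn F (C₁ ⊔ C₂ : PointedCone ℚ _) := by
  obtain ⟨F, hF, hzero⟩ := exists_extension_to_sup hF₁.nonneg hF₂ ha₁ ha₂ hspan (hF₁.eq_zero ha₁)
  refine ⟨F, fun x hx hx0 => (hF x hx).lt_of_ne fun hFx => hx0 ?_⟩
  obtain ⟨hx₁, hF₁x⟩ : x ∈ {x | x ∈ C₁ ∧ F₁ x = 0} := hzero ▸ ⟨hx, hFx.symm⟩
  exact hF₁.eq_zero hx₁ hF₁x

theorem IsExtremeRay.sup {F₂ : Dual ℚ (Fin n → ℚ)} {R : Set (Fin n → ℚ)}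
    (hR : IsExtremeRay C₁ R) (hF₂ : IsStrictlyPositiveOn F₂ C₂) (ha₁ : a ∈ C₁) (ha₂ : a ∈ C₂)
    (hspan : span ℚ (C₁ : Set (Fin n → ℚ)) ⊓ span ℚ C₂ = ℚ ∙ a) (hint₁ : ¬ OnExtremeRay C₁ a) :
    IsExtremeRay (C₁ ⊔ C₂ : PointedCone ℚ _) R := by
  obtain ⟨F₁, hF₁, hRF, hrank⟩ := isExtremeRay_iff.1 hR
  obtain ⟨F, hF, hzero⟩ := exists_extension_to_sup hF₁ hF₂ ha₁ ha₂ hspan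
    fun h => absurd ⟨R, hR, hRF ▸ ⟨ha₁, h⟩⟩ hint₁
  exact isExtremeRay_iff.2 ⟨F, hF, hRF.trans hzero.symm, hrank⟩

theorem IsExtremeRay.span_le_of_not_subset {R : Set (Fin n → ℚ)}
    (hR : IsExtremeRay (C₁ ⊔ C₂ : PointedCone ℚ _) R) (h : ¬ R ⊆ C₁) : span ℚ R ≤ span ℚ C₂ := by
  obtain ⟨F, hF, hRF, hrank⟩ := isExtremeRay_iff.1 hR
  obtain ⟨x, hxR, hx₁⟩ := Set.not_subset.1 h
  rw [hRF] at hxR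
  obtain ⟨x₁, h₁, x₂, h₂, rfl⟩ := mem_sup.1 hxR.1
  have h₁F := hF x₁ (mem_sup_left h₁)
  have h₂F := hF x₂ (mem_sup_right h₂)
  have hFx : F x₁ + F x₂ = 0 := (map_add F x₁ x₂).symm.trans hxR.2
  have hx₂R : x₂ ∈ R := hRF ▸ ⟨mem_sup_right h₂, by linarith⟩
  have hx₂0 : x₂ ≠ 0 := by
    rintro rfl
    exact hx₁ (by simpa using h₁)
  rw [eq_span_singleton_of_finrank_eq_one hrank (subset_span hx₂R) hx₂0]
  exact span_mono (Set.singleton_subset_iff.2 h₂)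

theorem IsExtremeRay.of_sup {R : Set (Fin n → ℚ)}
    (hR : IsExtremeRay (C₁ ⊔ C₂ : PointedCone ℚ _) R) (ha₁ : a ∈ C₁) (hspan : span ℚ (C₁ : Set (Fin n → ℚ)) ⊓ span ℚ C₂ = ℚ ∙ a)
    (hint₁ : ¬ OnExtremeRay C₁ a) : IsExtremeRay C₁ R ∨ IsExtremeRay C₂ R := by
  by_cases hR₁ : R ⊆ C₁
  · exact .inl (hR.of_subset (fun _ => mem_sup_left) hR₁)
  by_cases hR₂ : R ⊆ C₂
  · exact .inr (hR.of_subset (fun _ => mem_sup_right) hR₂)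
  have hR' : IsExtremeRay (C₂ ⊔ C₁ : PointedCone ℚ _) R := sup_comm C₁ C₂ ▸ hR
  have hRa : span ℚ R = ℚ ∙ a := eq_span_singleton_of_le hR.finrank_span
    (hspan ▸ le_inf (hR'.span_le_of_not_subset hR₂) (hR.span_le_of_not_subset hR₁))
  have haR : a ∈ R := hR.mem_of_mem_span (mem_sup_left ha₁) (hRa ▸ mem_span_singleton_self a)
  refine absurd ⟨R ∩ C₁, hR.inter_of_span_le (fun _ => mem_sup_left) ?_, haR, ha₁⟩ hint₁
  rw [hRa, span_singleton_le_iff_mem]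
  exact subset_span ⟨haR, ha₁⟩

theorem setOf_isExtremeRay_sup {F₁ F₂ : Dual ℚ (Fin n → ℚ)}
    (hF₁ : IsStrictlyPositiveOn F₁ C₁) (hF₂ : IsStrictlyPositiveOn F₂ C₂) (ha₁ : a ∈ C₁)
    (ha₂ : a ∈ C₂) (hspan : span ℚ (C₁ : Set (Fin n → ℚ)) ⊓ span ℚ C₂ = ℚ ∙ a)
    (hint₁ : ¬ OnExtremeRay C₁ a) (hint₂ : ¬ OnExtremeRay C₂ a) :
    {R | IsExtremeRay (C₁ ⊔ C₂ : PointedCone ℚ _) R} =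
      {R : Set (Fin n → ℚ) | IsExtremeRay C₁ R} ∪ {R : Set (Fin n → ℚ) | IsExtremeRay C₂ R} := by
  ext R
  refine ⟨fun hR => hR.of_sup ha₁ hspan hint₁, ?_⟩
  rintro (hR | hR)
  · exact hR.sup hF₂ ha₁ ha₂ hspan hint₁
  · rw [sup_comm]
    exact hR.sup hF₁ ha₂ ha₁ (inf_comm (span ℚ (C₁ : Set (Fin n → ℚ))) _ ▸ hspan) hint₂

theorem ncard_setOf_isExtremeRay_sup {F₁ F₂ : Dual ℚ (Fin n → ℚ)}
    (hF₁ : IsStrictlyPositiveOn F₁ C₁) (hF₂ : IsStrictlyPositiveOn F₂ C₂) (ha₁ : a ∈ C₁)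
    (ha₂ : a ∈ C₂) (hspan : span ℚ (C₁ : Set (Fin n → ℚ)) ⊓ span ℚ C₂ = ℚ ∙ a)
    (hint₁ : ¬ OnExtremeRay C₁ a) (hint₂ : ¬ OnExtremeRay C₂ a)
    (hfin₁ : {R : Set (Fin n → ℚ) | IsExtremeRay C₁ R}.Finite)
    (hfin₂ : {R : Set (Fin n → ℚ) | IsExtremeRay C₂ R}.Finite) :
    {R : Set (Fin n → ℚ) | IsExtremeRay (C₁ ⊔ C₂ : PointedCone ℚ _) R}.ncard =
      {R : Set (Fin n → ℚ) | IsExtremeRay C₁ R}.ncard +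
        {R : Set (Fin n → ℚ) | IsExtremeRay C₂ R}.ncard := by
  rw [setOf_isExtremeRay_sup hF₁ hF₂ ha₁ ha₂ hspan hint₁ hint₂, Set.ncard_union_eq _ hfin₁ hfin₂]
  exact Set.disjoint_left.2 fun R h₁ h₂ => not_isExtremeRay_and_isExtremeRay ha₁ hspan hint₁ h₁ h₂

end DirectSum

section Simplex

variable {r₁ r₂ : Fin n → ℚ}

theorem span_rayOf (r : Fin n → ℚ) : span ℚ (rayOf r) = ℚ ∙ r := by
  apply le_antisymm
  · rw [span_le]
    rintro x ⟨q, -, rfl⟩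
    exact smul_mem _ q (mem_span_singleton_self r)
  · rw [span_singleton_le_iff_mem]
    exact subset_span ⟨1, zero_le_one, (one_smul ℚ r).symm⟩

theorem rayOf_ne_rayOf (h : LinearIndependent ℚ ![r₁, r₂]) : rayOf r₁ ≠ rayOf r₂ := by
  intro he
  obtain ⟨q, -, hq⟩ : r₁ ∈ rayOf r₂ := he ▸ ⟨1, zero_le_one, (one_smul ℚ r₁).symm⟩
  have := LinearIndependent.pair_iff.1 h 1 (-q) (by rw [hq]; module)
  simp at this

theorem coneDim_posSpan_pair (h : LinearIndependent ℚ ![r₁, r₂]) :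
    coneDim (posSpan {r₁, r₂}) = 2 := by
  rw [coneDim, span_posSpan, ← Matrix.range_cons_cons_empty r₁ r₂ ![], finrank_span_eq_card h]
  simp

theorem exists_isStrictlyPositiveOn_posSpan_pair (h : LinearIndependent ℚ ![r₁, r₂]) :
    ∃ F : Dual ℚ (Fin n → ℚ), IsStrictlyPositiveOn F (posSpan {r₁, r₂}) := by
  obtain ⟨F, hF⟩ := h.exists_dual_apply_eq ![1, 1]
  refine ⟨F, fun x hx hx0 => ?_⟩
  obtain ⟨α, β, hα, hβ, rfl⟩ := mem_posSpan_pair.1 hx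
  have hF₁ : F r₁ = 1 := hF 0
  have hF₂ : F r₂ = 1 := hF 1
  simp only [map_add, map_smul, hF₁, hF₂, smul_eq_mul, mul_one]
  refine (add_nonneg hα hβ).lt_of_ne fun hαβ => hx0 ?_
  obtain ⟨rfl, rfl⟩ : α = 0 ∧ β = 0 := ⟨by linarith, by linarith⟩
  simp

theorem isExtremeRay_posSpan_pair_rayOf (h : LinearIndependent ℚ ![r₁, r₂]) :
    IsExtremeRay (posSpan {r₁, r₂}) (rayOf r₁) := by
  obtain ⟨F, hF⟩ := h.exists_dual_apply_eq ![0, 1]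
  have hF₁ : F r₁ = 0 := hF 0
  have hF₂ : F r₂ = 1 := hF 1
  have hFx : ∀ α β : ℚ, F (α • r₁ + β • r₂) = β := by simp [hF₁, hF₂]
  refine isExtremeRay_iff.2 ⟨F, fun x hx => ?_, Set.ext fun x => ⟨?_, ?_⟩, ?_⟩
  · obtain ⟨α, β, -, hβ, rfl⟩ := mem_posSpan_pair.1 hx
    rwa [hFx]
  · rintro ⟨q, hq, rfl⟩
    exact ⟨mem_posSpan_pair.2 ⟨q, 0, hq, le_rfl, by simp⟩, by simp [hF₁]⟩
  · rintro ⟨hx, hFx0⟩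
    obtain ⟨α, β, hα, -, rfl⟩ := mem_posSpan_pair.1 hx
    rw [hFx] at hFx0
    exact ⟨α, hα, by simp [hFx0]⟩
  · rw [span_rayOf]
    exact finrank_span_singleton (h.ne_zero 0)

theorem setOf_eq_rayOf_of_pos {F : Dual ℚ (Fin n → ℚ)} (hF : ∀ x ∈ posSpan {r₁, r₂}, 0 ≤ F x)
    (h₂ : 0 < F r₂) (hrank : finrank ℚ (span ℚ {x ∈ posSpan {r₁, r₂} | F x = 0}) = 1) :
    {x ∈ posSpan {r₁, r₂} | F x = 0} = rayOf r₁ := by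
  have h₁ : 0 ≤ F r₁ := hF r₁ (mem_posSpan_pair.2 ⟨1, 0, zero_le_one, le_rfl, by simp⟩)
  have hsub : {x ∈ posSpan {r₁, r₂} | F x = 0} ⊆ rayOf r₁ := by
    rintro x ⟨hx, hFx⟩
    obtain ⟨α, β, hα, hβ, rfl⟩ := mem_posSpan_pair.1 hx
    simp only [map_add, map_smul, smul_eq_mul] at hFx
    obtain rfl : β = 0 := by nlinarith [mul_nonneg hα h₁, mul_nonneg hβ h₂.le]
    exact ⟨α, hα, by simp⟩
  obtain ⟨x, hx, hx0⟩ := exists_mem_ne_zero_of_finrank_span_eq_one hrank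
  obtain ⟨q, -, rfl⟩ := hsub hx
  have hF₁ : F r₁ = 0 := by
    have : q * F r₁ = 0 := by simpa using hx.2
    exact (mul_eq_zero.1 this).resolve_left fun hq => hx0 (by simp [hq])
  refine hsub.antisymm ?_
  rintro _ ⟨p, hp, rfl⟩
  exact ⟨mem_posSpan_pair.2 ⟨p, 0, hp, le_rfl, by simp⟩, by simp [hF₁]⟩

theorem IsExtremeRay.eq_rayOf_or_eq_rayOf (h : LinearIndependent ℚ ![r₁, r₂])
    {R : Set (Fin n → ℚ)} (hR : IsExtremeRay (posSpan {r₁, r₂}) R) :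
    R = rayOf r₁ ∨ R = rayOf r₂ := by
  obtain ⟨F, hF, rfl, hrank⟩ := isExtremeRay_iff.1 hR
  rcases (hF r₂ (mem_posSpan_pair.2 ⟨0, 1, le_rfl, zero_le_one, by simp⟩)).lt_or_eq with h₂ | h₂
  · exact .inl (setOf_eq_rayOf_of_pos hF h₂ hrank)
  rcases (hF r₁ (mem_posSpan_pair.2 ⟨1, 0, zero_le_one, le_rfl, by simp⟩)).lt_or_eq with h₁ | h₁
  · rw [Set.pair_comm] at hF hrank ⊢
    exact .inr (setOf_eq_rayOf_of_pos hF h₁ hrank)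
  have hcone : {x ∈ posSpan {r₁, r₂} | F x = 0} = posSpan {r₁, r₂} := by
    refine Set.sep_eq_self_iff_mem_true.2 fun x hx => ?_
    obtain ⟨α, β, -, -, rfl⟩ := mem_posSpan_pair.1 hx
    simp [← h₁, ← h₂]
  have := coneDim_posSpan_pair h
  rw [coneDim, ← hcone, hrank] at this
  omega

theorem setOf_isExtremeRay_posSpan_pair (h : LinearIndependent ℚ ![r₁, r₂]) :
    {R | IsExtremeRay (posSpan {r₁, r₂}) R} = {rayOf r₁, rayOf r₂} := by
  ext R
  refine ⟨fun hR => hR.eq_rayOf_or_eq_rayOf h, ?_⟩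
  rintro (rfl | rfl)
  · exact isExtremeRay_posSpan_pair_rayOf h
  · rw [Set.pair_comm]
    exact isExtremeRay_posSpan_pair_rayOf (LinearIndependent.pair_symm_iff.1 h)

end Simplex

namespace GenBipyramidal

variable {σ : Set (Fin n → ℚ)}

theorem exists_eq_coe (h : GenBipyramidal σ) : ∃ C : PointedCone ℚ (Fin n → ℚ), σ = C := by
  cases h <;> exact ⟨_, posSpan_eq_hull _⟩

theorem exists_isStrictlyPositiveOn (h : GenBipyramidal σ) :
    ∃ F : Dual ℚ (Fin n → ℚ), IsStrictlyPositiveOn F σ := by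
  induction h with
  | simplex2 r₁ r₂ h => exact exists_isStrictlyPositiveOn_posSpan_pair h
  | internal σ₁ σ₂ a h₁ h₂ hds _ _ ih₁ ih₂ =>
    obtain ⟨C₁, rfl⟩ := h₁.exists_eq_coe
    obtain ⟨C₂, rfl⟩ := h₂.exists_eq_coe
    obtain ⟨⟨ha₁, ha₂⟩, hspan, -⟩ := hds
    obtain ⟨F₁, hF₁⟩ := ih₁
    obtain ⟨F₂, hF₂⟩ := ih₂
    rw [posSpan_union_coe]
    exact hF₁.exists_sup hF₂ ha₁ ha₂ hspan

theorem ncard_setOf_isExtremeRay (h : GenBipyramidal σ) :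
    2 ≤ coneDim σ ∧ {R | IsExtremeRay σ R}.ncard = 2 * coneDim σ - 2 := by
  induction h with
  | simplex2 r₁ r₂ h =>
    rw [coneDim_posSpan_pair h, setOf_isExtremeRay_posSpan_pair h,
      Set.ncard_pair (rayOf_ne_rayOf h)]
    norm_num
  | internal σ₁ σ₂ a h₁ h₂ hds hint₁ hint₂ ih₁ ih₂ =>
    obtain ⟨F₁, hF₁⟩ := h₁.exists_isStrictlyPositiveOn
    obtain ⟨F₂, hF₂⟩ := h₂.exists_isStrictlyPositiveOn
    obtain ⟨C₁, rfl⟩ := h₁.exists_eq_coe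
    obtain ⟨C₂, rfl⟩ := h₂.exists_eq_coe
    obtain ⟨⟨ha₁, ha₂⟩, hspan, -⟩ := hds
    have hpos₁ : {R : Set (Fin n → ℚ) | IsExtremeRay C₁ R}.ncard ≠ 0 := by omega
    have hpos₂ : {R : Set (Fin n → ℚ) | IsExtremeRay C₂ R}.ncard ≠ 0 := by omega
    have ha0 : a ≠ 0 := by
      obtain ⟨R, hR⟩ := Set.nonempty_of_ncard_ne_zero hpos₁
      rintro rfl
      exact hint₁ ⟨R, hR, hR.zero_mem C₁.zero_mem⟩
    have hdim := coneDim_posSpan_union_add_one ha0 hspan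
    rw [posSpan_union_coe] at hdim ⊢
    rw [ncard_setOf_isExtremeRay_sup hF₁ hF₂ ha₁ ha₂ hspan hint₁ hint₂
      (Set.finite_of_ncard_ne_zero hpos₁) (Set.finite_of_ncard_ne_zero hpos₂)]
    omega

end GenBipyramidal

end Cones

theorem genBipyramidal_rays_general {n : ℕ} (σ : Set (Fin n → ℚ))
    (hσ : GenBipyramidal σ) (m : ℕ) (hdim : coneDim σ = m) :
    {R | IsExtremeRay σ R}.ncard = 2 * m - 2 :=
  hdim ▸ hσ.ncard_setOf_isExtremeRay.2

/-- A general bipyramidal cone of dimension `m ≥ 2` has exactly `2m - 2`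
extreme rays. -/
theorem genBipyramidal_rays {n : ℕ} (σ : Set (Fin n → ℚ))
    (hσ : GenBipyramidal σ) (m : ℕ) (hm : 2 ≤ m) (hdim : coneDim σ = m) :
    {R | IsExtremeRay σ R}.ncard = 2 * m - 2 :=
  genBipyramidal_rays_general σ hσ m hdim
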